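/- Let C_I > 0, c > 0, real numbers r, ε, α with 0 < r < 1, 1/C_I < r·ε, and ε < α. Let s, g, t, b, p be nonnegative real numbers satisfying C_I·b² ≤ s² and p² ≤ (c² + 1)·g². Then r·s² + (1 − r)·g² + α·t² − 2·b·t ≥ C·(s² + p² + t²), where C = min{ r − 1/(ε·C_I), (1 − r)/(c² + 1), α − ε } and C > 0. -/
import Mathlib


/-- Algebraic content of the coercivity estimate for the stabilised bilinear form:
`r s² + (1-r) g² + α t² - 2 b t ≥ C (s² + p² + t²)` where
`C = min { r - 1/(ε C_I), (1-r)/(c²+1), α - ε }`, and `C > 0`. -/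
theorem coercivity_algebraic
    (CI c r ε α : ℝ) (hCI : 0 < CI) (hc : 0 < c)
    (hr0 : 0 < r) (hr1 : r < 1) (hrε : 1 / CI < r * ε) (hεα : ε < α)
    (s g t b p : ℝ) (hs : 0 ≤ s) (hg : 0 ≤ g) (ht : 0 ≤ t) (hb : 0 ≤ b)
    (hp : 0 ≤ p)
    (hinv : CI * b ^ 2 ≤ s ^ 2) (hpoin : p ^ 2 ≤ (c ^ 2 + 1) * g ^ 2) :
    0 < min (r - 1 / (ε * CI)) (min ((1 - r) / (c ^ 2 + 1)) (α - ε)) ∧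
      r * s ^ 2 + (1 - r) * g ^ 2 + α * t ^ 2 - 2 * b * t ≥
        min (r - 1 / (ε * CI)) (min ((1 - r) / (c ^ 2 + 1)) (α - ε)) *
          (s ^ 2 + p ^ 2 + t ^ 2) := by
  have hε : 0 < ε := by
    by_contra h
    push_neg at h
    have : r * ε ≤ 0 := mul_nonpos_of_nonneg_of_nonpos hr0.le h
    have : 0 < 1 / CI := by positivity
    linarith
  have hεCI : 0 < ε * CI := by positivity
  have h1 : 0 < r - 1 / (ε * CI) := by
    rw [sub_pos, div_lt_iff₀ hεCI]
    have : 1 / CI < r * ε := hrε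
    rw [div_lt_iff₀ hCI] at this
    linarith
  have hc1 : (0:ℝ) < c ^ 2 + 1 := by positivity
  have h2 : 0 < (1 - r) / (c ^ 2 + 1) := div_pos (by linarith) hc1
  have h3 : 0 < α - ε := by linarith
  have hC : 0 < min (r - 1 / (ε * CI)) (min ((1 - r) / (c ^ 2 + 1)) (α - ε)) :=
    lt_min h1 (lt_min h2 h3)
  refine ⟨hC, ?_⟩
  set C := min (r - 1 / (ε * CI)) (min ((1 - r) / (c ^ 2 + 1)) (α - ε)) with hCdef
  have hCs : C ≤ r - 1 / (ε * CI) := min_le_left _ _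
  have hCp : C ≤ (1 - r) / (c ^ 2 + 1) := le_trans (min_le_right _ _) (min_le_left _ _)
  have hCt : C ≤ α - ε := le_trans (min_le_right _ _) (min_le_right _ _)
  -- Young: 2 b t ≤ ε t² + b²/ε
  have hyoung : 2 * b * t ≤ ε * t ^ 2 + b ^ 2 / ε := by
    have key : ε * t ^ 2 + b ^ 2 / ε - 2 * b * t = (ε * t - b) ^ 2 / ε := by
      field_simp; ring
    nlinarith [div_nonneg (sq_nonneg (ε * t - b)) hε.le]
  -- s term: r s² - b²/ε ≥ (r - 1/(ε CI)) s²
  have hsterm : (r - 1 / (ε * CI)) * s ^ 2 ≤ r * s ^ 2 - b ^ 2 / ε := by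
    have hb2 : b ^ 2 ≤ s ^ 2 / CI := by
      rw [le_div_iff₀ hCI]; nlinarith
    have : b ^ 2 / ε ≤ s ^ 2 / (CI * ε) := by
      rw [div_le_div_iff₀ hε (by positivity)]
      nlinarith [mul_nonneg (sub_nonneg.2 hinv) hε.le]
    have heq : (1 / (ε * CI)) * s ^ 2 = s ^ 2 / (CI * ε) := by
      rw [mul_comm ε CI, div_mul_eq_mul_div, one_mul]
    linarith
  -- p term
  have hpterm : ((1 - r) / (c ^ 2 + 1)) * p ^ 2 ≤ (1 - r) * g ^ 2 := by
    rw [div_mul_eq_mul_div, div_le_iff₀ hc1]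
    nlinarith [mul_le_mul_of_nonneg_left hpoin (by linarith : (0:ℝ) ≤ 1 - r)]
  have hCnn := hC.le
  have e1 : C * s ^ 2 ≤ (r - 1 / (ε * CI)) * s ^ 2 :=
    mul_le_mul_of_nonneg_right hCs (sq_nonneg s)
  have e2 : C * p ^ 2 ≤ ((1 - r) / (c ^ 2 + 1)) * p ^ 2 :=
    mul_le_mul_of_nonneg_right hCp (sq_nonneg p)
  have e3 : C * t ^ 2 ≤ (α - ε) * t ^ 2 :=
    mul_le_mul_of_nonneg_right hCt (sq_nonneg t)
  linarith
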